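/- If a core graph contains a 5-hole, then it has at most ten vertices. -/

import Mathlib

open SimpleGraph

namespace TP

/-- A set of vertices is independent: no two of its vertices are adjacent. -/
def IsIndep {V : Type*} (G : SimpleGraph V) (S : Set V) : Prop :=
  S.Pairwise fun u v => ¬ G.Adj u v

/-- The finite vertex set `s` induces a cycle of length `n` in `G`. -/
def IsInducedCycle {V : Type*} (G : SimpleGraph V) (n : ℕ) (s : Finset V) : Prop :=
  3 ≤ n ∧ s.card = n ∧ Nonempty (G.induce (s : Set V) ≃g SimpleGraph.cycleGraph n)

/-- The polytope `P(G)` given by nonnegativity, edge and odd-cycle inequalities. -/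
def tPolytope {V : Type*} [Fintype V] (G : SimpleGraph V) : Set (V → ℝ) :=
  {x | (∀ v, 0 ≤ x v ∧ x v ≤ 1) ∧
    (∀ ⦃u v⦄, G.Adj u v → x u + x v ≤ 1) ∧
    (∀ (n : ℕ) (s : Finset V), Odd n → IsInducedCycle G n s →
      ∑ v ∈ s, x v ≤ ((n : ℝ) - 1) / 2)}

/-- The independent set polytope: the convex hull of characteristic vectors of
independent sets. -/
def stabPolytope {V : Type*} [Fintype V] (G : SimpleGraph V) : Set (V → ℝ) :=
  convexHull ℝ {x | ∃ S : Set V, IsIndep G S ∧ x = S.indicator fun _ => (1 : ℝ)}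

/-- A graph is t-perfect if `P(G)` equals its independent set polytope. -/
def TPerfect {V : Type*} [Fintype V] (G : SimpleGraph V) : Prop :=
  tPolytope G = stabPolytope G

/-- The graph obtained from `G` by a t-contraction at `v` : the closed neighbourhood
of `v` is replaced by a single new vertex (`none`), adjacent to every vertex that had
a neighbour in the closed neighbourhood of `v`. -/
def tContract {V : Type*} (G : SimpleGraph V) (v : V) :
    SimpleGraph (Option {w : V // w ≠ v ∧ ¬ G.Adj v w}) :=
  SimpleGraph.fromRel fun a b =>
    match a, b with
    | some a, some b => G.Adj a.1 b.1
    | some a, none => ∃ x, (x = v ∨ G.Adj v x) ∧ G.Adj a.1 x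
    | none, _ => False

/-- A bundled finite simple graph. -/
structure FinGraph : Type 1 where
  V : Type
  [fintype : Fintype V]
  graph : SimpleGraph V

attribute [instance] FinGraph.fintype

def FinGraph.of {V : Type} [Fintype V] (G : SimpleGraph V) : FinGraph :=
  FinGraph.mk V G

/-- `B` is obtained from `A` by deleting one vertex (up to isomorphism). -/
def DeleteStep (A B : FinGraph) : Prop :=
  ∃ v : A.V, Nonempty (B.graph ≃g A.graph.induce {w | w ≠ v})

/-- `B` is obtained from `A` by a t-contraction at a vertex whose neighbourhood is
independent (up to isomorphism). -/
def ContractStep (A B : FinGraph) : Prop :=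
  ∃ v : A.V, IsIndep A.graph (A.graph.neighborSet v) ∧
    Nonempty (B.graph ≃g tContract A.graph v)

/-- One step: a vertex deletion or a t-contraction. -/
def Step (A B : FinGraph) : Prop := DeleteStep A B ∨ ContractStep A B

/-- `TMinor B A` : `B` is a t-minor of `A`, i.e. obtained from `A` by a sequence of
vertex deletions and t-contractions. -/
def TMinor (B A : FinGraph) : Prop := Relation.ReflTransGen Step A B

/-- `B` is a proper t-minor of `A` : a t-minor with fewer vertices. -/
def ProperTMinor (B A : FinGraph) : Prop :=
  TMinor B A ∧ Fintype.card B.V < Fintype.card A.V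

/-- A graph is minimally t-imperfect if it is not t-perfect but every proper t-minor
of it is t-perfect. -/
def MinimallyTImperfect {V : Type} [Fintype V] (G : SimpleGraph V) : Prop :=
  ¬ TPerfect G ∧ ∀ B : FinGraph, ProperTMinor B (FinGraph.of G) → TPerfect B.graph

/-- A core graph: every proper t-minor of `G` and every proper t-minor of its
complement is t-perfect. -/
def IsCore {V : Type} [Fintype V] (G : SimpleGraph V) : Prop :=
  (∀ B : FinGraph, ProperTMinor B (FinGraph.of G) → TPerfect B.graph) ∧
  (∀ B : FinGraph, ProperTMinor B (FinGraph.of Gᶜ) → TPerfect B.graph)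

/-- A partition of `V \ {v}` into `count` sets of size `size`, all satisfying `P`. -/
def CoverOff {V : Type*} (v : V) (count size : ℕ) (P : Finset V → Prop) : Prop :=
  ∃ f : Fin count → Finset V,
    (∀ i, P (f i) ∧ (f i).card = size) ∧
    (∀ i j, i ≠ j → Disjoint (f i) (f j)) ∧
    (∀ i, v ∉ f i) ∧
    (∀ w, w ≠ v → ∃ i, w ∈ f i)

/-- `(p,q)`-partitionable graphs. -/
def PQPartitionable {V : Type*} [Fintype V] (G : SimpleGraph V) (p q : ℕ) : Prop :=
  2 ≤ p ∧ 2 ≤ q ∧ Fintype.card V = p * q + 1 ∧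
  ∀ v : V,
    CoverOff v q p (fun S => IsIndep G (S : Set V)) ∧
    CoverOff v p q (fun S => G.IsClique (S : Set V))

/-- `G` has an odd hole: an induced odd cycle of length at least five. -/
def HasOddHole {V : Type*} (G : SimpleGraph V) : Prop :=
  ∃ (n : ℕ) (s : Finset V), Odd n ∧ 5 ≤ n ∧ IsInducedCycle G n s

/-- A graph is perfect iff neither it nor its complement has an odd hole. -/
def GPerfect {V : Type*} (G : SimpleGraph V) : Prop :=
  ¬ HasOddHole G ∧ ¬ HasOddHole Gᶜ

/-- Every vertex has degree at least three and at most five. -/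
def DegreeBounded {V : Type*} (G : SimpleGraph V) : Prop :=
  ∀ v, 3 ≤ (G.neighborSet v).ncard ∧ (G.neighborSet v).ncard ≤ 5

/-- The `n`-wheel: an `n`-cycle plus a vertex (`none`) adjacent to every cycle vertex. -/
def wheel (n : ℕ) : SimpleGraph (Option (Fin n)) :=
  SimpleGraph.fromRel fun a b =>
    match a, b with
    | some i, some j => (SimpleGraph.cycleGraph n).Adj i j
    | none, some _ => True
    | _, none => False

/-- Vertex type of the standard 9-vertex labeling: `inl i` is `v_{i+1}`,
`inr j` is `u_{j+1}`. -/
abbrev V9 := Fin 5 ⊕ Fin 4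

/-- Vertex type of the standard 10-vertex labeling. -/
abbrev V10 := Fin 5 ⊕ Fin 5

/-- The standard 9-vertex labeling: `v1 … v5` form a 5-hole; the neighbours of `u_i`
among the `v`'s are `v_{i+2}` and `v_{i+3}` together possibly with `v_i`. -/
def Std9 (G : SimpleGraph V9) : Prop :=
  (∀ i j : Fin 5, G.Adj (.inl i) (.inl j) ↔ (j = i + 1 ∨ i = j + 1)) ∧
  (∀ (i : Fin 4) (k : Fin 5), G.Adj (.inr i) (.inl k) →
    k = i.castSucc + 2 ∨ k = i.castSucc + 3 ∨ k = i.castSucc) ∧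
  (∀ i : Fin 4, G.Adj (.inr i) (.inl (i.castSucc + 2)) ∧ G.Adj (.inr i) (.inl (i.castSucc + 3)))

/-- The standard 10-vertex labeling. -/
def Std10 (G : SimpleGraph V10) : Prop :=
  (∀ i j : Fin 5, G.Adj (.inl i) (.inl j) ↔ (j = i + 1 ∨ i = j + 1)) ∧
  (∀ (i k : Fin 5), G.Adj (.inr i) (.inl k) → k = i + 2 ∨ k = i + 3 ∨ k = i) ∧
  (∀ i : Fin 5, G.Adj (.inr i) (.inl (i + 2)) ∧ G.Adj (.inr i) (.inl (i + 3)))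

/-- The 9-vertex graph of the standard labeling with prescribed `U`-edges and
prescribed extra edges `u_i v_i`. -/
def graph9 (uEdges : List (Fin 4 × Fin 4)) (extra : List (Fin 4)) : SimpleGraph V9 :=
  SimpleGraph.fromRel fun a b =>
    match a, b with
    | .inl i, .inl j => j = i + 1
    | .inr i, .inl k => k = i.castSucc + 2 ∨ k = i.castSucc + 3 ∨ (i ∈ extra ∧ k = i.castSucc)
    | .inl _, .inr _ => False
    | .inr i, .inr j => (i, j) ∈ uEdges

/-- The 10-vertex graph of the standard labeling with prescribed `U`-edges and
prescribed extra edges `u_i v_i`. -/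
def graph10 (uEdges : List (Fin 5 × Fin 5)) (extra : List (Fin 5)) : SimpleGraph V10 :=
  SimpleGraph.fromRel fun a b =>
    match a, b with
    | .inl i, .inl j => j = i + 1
    | .inr i, .inl k => k = i + 2 ∨ k = i + 3 ∨ (i ∈ extra ∧ k = i)
    | .inl _, .inr _ => False
    | .inr i, .inr j => (i, j) ∈ uEdges

/-- The graph `(12°435°1)`. -/
def G12435 : SimpleGraph V10 :=
  graph10 [(0,1),(1,3),(3,2),(2,4),(4,0)] [1,4]

/-- The graph `(1°2°435°1°)`. -/
def G12435' : SimpleGraph V10 :=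
  graph10 [(0,1),(1,3),(3,2),(2,4),(4,0)] [0,1,4]



/-!
Vertex deletion is a t-minor operation, so neither a core graph `G` nor its complement has an
induced copy, on fewer vertices than `G`, of a graph that is not t-perfect. Such graphs are `K₄`,
the 5-wheel, and the pentagon plus a vertex seeing three or four consecutive vertices: in each,
a point of `P` close to the constant `1/3` violates an inequality valid for all independent sets.

Fix a 5-hole `C = v₀ … v₄`. A vertex `u` outside `C` has no three consecutive neighbours on `C`,
and, as `Cᶜ` is again a pentagon (`vₖ ↦ v₂ₖ`), no three consecutive non-neighbours along `Cᶜ`.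
Hence `u` sees the edge `v_{j+2} v_{j+3}` opposite some `v_j` but neither neighbour of `v_j`.
Two vertices with the same `j` would span a `K₄` with `v_{j+2}, v_{j+3}` in `G`, or with
`v_{j+1}, v_{j+4}` in `Gᶜ`. So at most five vertices lie outside `C`.
-/

lemma adj_of_isInducedCycle_three {V : Type*} {G : SimpleGraph V} {t : Finset V}
    (ht : IsInducedCycle G 3 t) {a b : V} (ha : a ∈ t) (hb : b ∈ t) (hab : a ≠ b) :
    G.Adj a b := by
  obtain ⟨-, -, ⟨e⟩⟩ := ht
  have hne : e ⟨a, ha⟩ ≠ e ⟨b, hb⟩ := e.injective.ne (by simpa using hab)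
  have hK3 : ∀ i j : Fin 3, i ≠ j → (cycleGraph 3).Adj i j := by decide
  exact e.map_adj_iff.1 (hK3 _ _ hne)

lemma exists_triangle_of_mem_isInducedCycle_three {V : Type*} {G : SimpleGraph V}
    {t : Finset V} (ht : IsInducedCycle G 3 t) {v : V} (hv : v ∈ t) :
    ∃ a a', G.Adj v a ∧ G.Adj v a' ∧ G.Adj a a' := by
  classical
  obtain ⟨a, a', haa', hpair⟩ := Finset.card_eq_two.1 <| by
    rw [Finset.card_erase_of_mem hv, ht.2.1]
  have ha : a ∈ t.erase v := by simp [hpair]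
  have ha' : a' ∈ t.erase v := by simp [hpair]
  rw [Finset.mem_erase] at ha ha'
  exact ⟨a, a', adj_of_isInducedCycle_three ht hv ha.2 ha.1.symm,
    adj_of_isInducedCycle_three ht hv ha'.2 ha'.1.symm,
    adj_of_isInducedCycle_three ht ha.2 ha'.2 haa'⟩

/-- A triangle inequality is tight at the constant `1/3`, while an odd cycle of length `n ≥ 5`
has slack `(n - 1)/2 - n/3 ≥ 1/3` there. -/
lemma one_third_add_mem_tPolytope {V : Type*} [Fintype V] (G : SimpleGraph V) (b : V → ℝ)
    (hb : ∀ v, 0 ≤ b v) (hsum : ∑ v, b v ≤ 1 / 3)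
    (htri : ∀ v a a', G.Adj v a → G.Adj v a' → G.Adj a a' → b v = 0) :
    (fun v => 1 / 3 + b v) ∈ tPolytope G := by
  classical
  have hle_sum : ∀ s : Finset V, ∑ v ∈ s, b v ≤ 1 / 3 := fun s =>
    (Finset.sum_le_sum_of_subset_of_nonneg s.subset_univ fun v _ _ => hb v).trans hsum
  refine ⟨fun v => ⟨by linarith [hb v], by linarith [hle_sum {v}, Finset.sum_singleton b v]⟩,
    fun u v huv => ?_, fun n t hn ht => ?_⟩
  · have := hle_sum {u, v}
    rw [Finset.sum_pair huv.ne] at this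
    linarith
  · have hsplit : ∑ v ∈ t, (1 / 3 + b v) = n / 3 + ∑ v ∈ t, b v := by
      rw [Finset.sum_add_distrib, Finset.sum_const, ht.2.1, nsmul_eq_mul]
      ring
    rw [hsplit]
    rcases ht.1.eq_or_lt with h3 | h3
    · subst h3
      have : ∑ v ∈ t, b v = 0 := Finset.sum_eq_zero fun v hv => by
        obtain ⟨a, a', h⟩ := exists_triangle_of_mem_isInducedCycle_three ht hv
        exact htri v a a' h.1 h.2.1 h.2.2
      rw [this]
      norm_num
    · have : (5 : ℝ) ≤ n := by
        obtain ⟨k, rfl⟩ := hn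
        norm_cast
        omega
      linarith [hle_sum t]

lemma not_tPerfect_of_mem_tPolytope {V : Type*} [Fintype V] {G : SimpleGraph V}
    {x : V → ℝ} (hx : x ∈ tPolytope G) (w : V → ℕ) (c : ℕ)
    (hindep : ∀ S : Finset V, (∀ a ∈ S, ∀ b ∈ S, ¬ G.Adj a b) → ∑ v ∈ S, w v ≤ c)
    (hx_gt : (c : ℝ) < ∑ v, w v * x v) : ¬ TPerfect G := by
  classical
  intro hG
  have hstab : stabPolytope G ⊆ {y | ∑ v, (w v : ℝ) * y v ≤ c} := by
    refine convexHull_min ?_ (convex_halfSpace_le ?_ _)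
    · rintro _ ⟨S, hS, rfl⟩
      have hSw := hindep (Finset.univ.filter (· ∈ S)) fun a ha b hb hab => by
        simp only [Finset.mem_filter] at ha hb
        exact hS ha.2 hb.2 hab.ne hab
      have hterm : ∀ v, (w v : ℝ) * S.indicator (fun _ => 1) v = if v ∈ S then (w v : ℝ) else 0 :=
        fun v => by by_cases hv : v ∈ S <;> simp [hv]
      simp_rw [Set.mem_ofPred_eq, hterm, ← Finset.sum_filter]
      exact_mod_cast hSw
    · exact ⟨fun y z => by simp [mul_add, Finset.sum_add_distrib],
        fun r y => by simp [Finset.mul_sum, mul_left_comm]⟩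
  exact absurd (hstab (hG ▸ hx)) (not_le.2 hx_gt)

/-- `F` with one new vertex `none`, adjacent exactly to the vertices in `N`. -/
def addVertex {W : Type*} (F : SimpleGraph W) (N : Finset W) : SimpleGraph (Option W) where
  Adj
    | some i, some j => F.Adj i j
    | none, some k | some k, none => k ∈ N
    | none, none => False
  symm := ⟨by
    rintro (_ | i) (_ | j) h
    exacts [h, h, h, h.symm]⟩
  loopless := ⟨by
    rintro (_ | i) h
    exacts [h, F.loopless.irrefl i h]⟩

instance {W : Type*} [DecidableEq W] (F : SimpleGraph W) [DecidableRel F.Adj] (N : Finset W) :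
    DecidableRel (addVertex F N).Adj
  | some i, some j => inferInstanceAs (Decidable (F.Adj i j))
  | none, some k => inferInstanceAs (Decidable (k ∈ N))
  | some k, none => inferInstanceAs (Decidable (k ∈ N))
  | none, none => inferInstanceAs (Decidable False)

def addVertexEmbedding {W V : Type*} {F : SimpleGraph W} {G : SimpleGraph V} (f : F ↪g G)
    {u : V} (hu : u ∉ Set.range f) {N : Finset W} (hN : ∀ k, G.Adj u (f k) ↔ k ∈ N) :
    addVertex F N ↪g G where
  toFun o := o.elim u f
  inj' := by
    rintro (_ | i) (_ | j) h
    · rfl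
    · exact absurd ⟨j, h.symm⟩ hu
    · exact absurd ⟨i, h⟩ hu
    · exact congrArg some (f.injective h)
  map_rel_iff' := by
    rintro (_ | i) (_ | j)
    · exact iff_of_false (G.loopless.irrefl u) id
    · exact hN j
    · exact G.adj_comm _ _ |>.trans (hN i)
    · exact f.map_adj_iff

def cycleGraph.addRight {n : ℕ} (a : Fin (n + 2)) : cycleGraph (n + 2) ≃g cycleGraph (n + 2) where
  toEquiv := Equiv.addRight a
  map_rel_iff' := by simp [cycleGraph_adj]

/-- The pentagon is self-complementary. -/
def cycleGraph.fiveEmbeddingCompl : cycleGraph 5 ↪g (cycleGraph 5)ᶜ where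
  toFun k := 2 * k
  inj' := by decide
  map_rel_iff' := by decide

lemma exists_addRight_of_three_consecutive (N : Finset (Fin 5))
    (h : ∃ a, a ∈ N ∧ a + 1 ∈ N ∧ a + 2 ∈ N) :
    ∃ a, ∃ M ∈ ({{0, 1, 2}, {0, 1, 2, 3}, Finset.univ} : Finset (Finset (Fin 5))),
      ∀ k, k + a ∈ N ↔ k ∈ M := by
  revert N
  decide

lemma not_tPerfect_completeGraph_fin_four : ¬ TPerfect (completeGraph (Fin 4)) := by
  refine not_tPerfect_of_mem_tPolytope (one_third_add_mem_tPolytope _ 0 (fun _ => le_rfl)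
    (by simp) fun _ _ _ _ _ _ => rfl) (fun _ => 1) 1 (by decide) ?_
  norm_num

lemma not_tPerfect_addVertex_cycleGraph_five_univ : ¬ TPerfect (addVertex (cycleGraph 5) Finset.univ) := by
  refine not_tPerfect_of_mem_tPolytope (one_third_add_mem_tPolytope _ 0 (fun _ => le_rfl)
    (by simp) fun _ _ _ _ _ _ => rfl) (fun v => if v = none then 2 else 1) 2 (by decide) ?_
  simp [Fintype.sum_option]
  norm_num

lemma not_tPerfect_addVertex_cycleGraph_five_three_consecutive :
    ¬ TPerfect (addVertex (cycleGraph 5) {0, 1, 2}) := by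
  refine not_tPerfect_of_mem_tPolytope (one_third_add_mem_tPolytope _
    (fun v => if v = some 3 ∨ v = some 4 then 1 / 6 else 0) (fun v => by split_ifs <;> norm_num)
    ?_ ?_) (fun _ => 1) 2 (by decide) ?_
  · simp [Fintype.sum_option, Fin.sum_univ_five]
    norm_num
  · rintro v a a' h1 h2 h3
    refine if_neg ?_
    rintro (rfl | rfl) <;> revert a a' <;> decide
  · simp [Fintype.sum_option, Fin.sum_univ_five]
    norm_num

lemma not_tPerfect_addVertex_cycleGraph_five_four_consecutive :
    ¬ TPerfect (addVertex (cycleGraph 5) {0, 1, 2, 3}) := by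
  refine not_tPerfect_of_mem_tPolytope (one_third_add_mem_tPolytope _
    (fun v => if v = some 4 then 1 / 3 else 0) (fun v => by split_ifs <;> norm_num)
    (by simp) ?_) (fun _ => 1) 2 (by decide) ?_
  · rintro v a a' h1 h2 h3
    refine if_neg ?_
    rintro rfl
    revert a a'
    decide
  · simp [Fintype.sum_option, Fin.sum_univ_five]
    norm_num

/-- `IsCore G` unfolds to `ProperTMinorsTPerfect G ∧ ProperTMinorsTPerfect Gᶜ`. -/
def ProperTMinorsTPerfect {V : Type} [Fintype V] (G : SimpleGraph V) : Prop :=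
  ∀ B : FinGraph, ProperTMinor B (FinGraph.of G) → TPerfect B.graph

/-- Delete the vertices outside the image of `f` one at a time; once only the image is left,
`f` is the isomorphism required by the last deletion step. -/
lemma tMinor_of_embedding {A B : FinGraph} (f : B.graph ↪g A.graph)
    (hf : ¬ Function.Surjective f) : TMinor B A := by
  classical
  induction hn : Fintype.card A.V using Nat.strong_induction_on generalizing A with
  | _ n ih =>
  obtain ⟨v, hv⟩ := not_forall.1 hf
  let A' : FinGraph := FinGraph.of (A.graph.induce {w | w ≠ v})
  let f' : B.graph ↪g A'.graph :=
    { toFun := fun z => ⟨f z, fun h => hv ⟨z, h⟩⟩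
      inj' := fun _ _ h => f.injective (congrArg Subtype.val h)
      map_rel_iff' := f.map_rel_iff }
  by_cases hf' : Function.Surjective f'
  · exact .single (.inl ⟨v, ⟨RelIso.ofSurjective f' hf'⟩⟩)
  · have hcard : Fintype.card A'.V < n :=
      hn ▸ Fintype.card_subtype_lt (p := (· ≠ v)) (x := v) (by simp)
    exact .head (.inl ⟨v, ⟨Iso.refl⟩⟩) (ih _ hcard f' hf' rfl)

namespace ProperTMinorsTPerfect

variable {V : Type} [Fintype V] {G : SimpleGraph V}

lemma tPerfect_of_embedding (hG : ProperTMinorsTPerfect G) {W : Type} [Fintype W]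
    {F : SimpleGraph W} (f : F ↪g G) (hcard : Fintype.card W < Fintype.card V) : TPerfect F :=
  hG (FinGraph.of F) ⟨tMinor_of_embedding (B := FinGraph.of F) (A := FinGraph.of G) f
    fun hf => (Fintype.card_le_of_surjective f hf).not_gt hcard, hcard⟩

lemma cliqueFree_four (hG : ProperTMinorsTPerfect G) (hcard : 4 < Fintype.card V) :
    G.CliqueFree 4 := fun _ hs =>
  not_tPerfect_completeGraph_fin_four <|
    hG.tPerfect_of_embedding (topEmbeddingOfNotCliqueFree hs.not_cliqueFree) (by simpa)

lemma not_adj_three_consecutive (hG : ProperTMinorsTPerfect G) (hcard : 6 < Fintype.card V)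
    (c : cycleGraph 5 ↪g G) {u : V} (hu : u ∉ Set.range c) (a : Fin 5) :
    ¬ (G.Adj u (c a) ∧ G.Adj u (c (a + 1)) ∧ G.Adj u (c (a + 2))) := by
  classical
  intro h
  obtain ⟨b, M, hM, hNM⟩ := exists_addRight_of_three_consecutive
    (Finset.univ.filter fun k => G.Adj u (c k)) ⟨a, by simpa using h⟩
  let c' := c.comp (cycleGraph.addRight b).toEmbedding
  have hu' : u ∉ Set.range c' := fun ⟨k, hk⟩ => hu ⟨_, hk⟩
  have hM_tPerfect := hG.tPerfect_of_embedding
    (addVertexEmbedding c' hu' (N := M) fun k => by simpa [c', cycleGraph.addRight] using hNM k)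
    (by simpa)
  simp only [Finset.mem_insert, Finset.mem_singleton] at hM
  rcases hM with rfl | rfl | rfl
  exacts [not_tPerfect_addVertex_cycleGraph_five_three_consecutive hM_tPerfect,
    not_tPerfect_addVertex_cycleGraph_five_four_consecutive hM_tPerfect,
    not_tPerfect_addVertex_cycleGraph_five_univ hM_tPerfect]

end ProperTMinorsTPerfect

/-- The second alternative says that three consecutive vertices of the complementary pentagon
`k ↦ 2 * k` lie outside `N`. -/
lemma pentagon_neighbourhood_trichotomy (N : Finset (Fin 5)) :
    (∃ a, a ∈ N ∧ a + 1 ∈ N ∧ a + 2 ∈ N) ∨ (∃ a, 2 * a ∉ N ∧ 2 * (a + 1) ∉ N ∧ 2 * (a + 2) ∉ N) ∨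
      ∃ j, j + 2 ∈ N ∧ j + 3 ∈ N ∧ j + 1 ∉ N ∧ j + 4 ∉ N := by
  revert N
  decide

/-- `u` attaches to the pentagon `c` like the vertex `u_j` of the standard labelling `Std10`. -/
def SeesOppositeEdge {V : Type*} {G : SimpleGraph V} (c : cycleGraph 5 ↪g G) (u : V) (j : Fin 5) :
    Prop :=
  G.Adj u (c (j + 2)) ∧ G.Adj u (c (j + 3)) ∧ ¬ G.Adj u (c (j + 1)) ∧ ¬ G.Adj u (c (j + 4))

lemma isNClique_four {V : Type*} [DecidableEq V] {G : SimpleGraph V} {a b c d : V}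
    (hab : G.Adj a b) (hac : G.Adj a c) (had : G.Adj a d) (hbc : G.Adj b c) (hbd : G.Adj b d)
    (hcd : G.Adj c d) : G.IsNClique 4 {a, b, c, d} := by
  refine ⟨?_, Finset.card_eq_four.2 ⟨a, b, c, d, hab.ne, hac.ne, had.ne, hbc.ne, hbd.ne, hcd.ne,
    rfl⟩⟩
  simp [isClique_insert, hab, hac, had, hbc, hbd, hcd]

namespace IsCore

variable {V : Type} [Fintype V] {G : SimpleGraph V}

lemma exists_seesOppositeEdge (hc : IsCore G) (hcard : 6 < Fintype.card V)
    (c : cycleGraph 5 ↪g G) {u : V} (hu : u ∉ Set.range c) : ∃ j, SeesOppositeEdge c u j := by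
  classical
  obtain ⟨hG, hGc⟩ : ProperTMinorsTPerfect G ∧ ProperTMinorsTPerfect Gᶜ := hc
  have hne : ∀ k, u ≠ c k := fun k h => hu ⟨k, h.symm⟩
  rcases pentagon_neighbourhood_trichotomy (Finset.univ.filter fun k => G.Adj u (c k)) with
    ⟨a, h⟩ | ⟨a, h⟩ | ⟨j, h⟩
  · exact absurd (by simpa using h) (hG.not_adj_three_consecutive hcard c hu a)
  · let c' : cycleGraph 5 ↪g Gᶜ := (Embedding.complEquiv c).comp cycleGraph.fiveEmbeddingCompl
    have hu' : u ∉ Set.range c' := fun ⟨k, hk⟩ => hu ⟨_, hk⟩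
    refine absurd ?_ (hGc.not_adj_three_consecutive hcard c' hu' a)
    simpa [c', cycleGraph.fiveEmbeddingCompl, Embedding.complEquiv, hne] using h
  · exact ⟨j, by simpa [SeesOppositeEdge] using h⟩

lemma eq_of_seesOppositeEdge (hc : IsCore G) (hcard : 4 < Fintype.card V)
    (c : cycleGraph 5 ↪g G) {u u' : V} (hu : u ∉ Set.range c) (hu' : u' ∉ Set.range c)
    {j : Fin 5} (h : SeesOppositeEdge c u j) (h' : SeesOppositeEdge c u' j) : u = u' := by
  classical
  obtain ⟨hG, hGc⟩ : ProperTMinorsTPerfect G ∧ ProperTMinorsTPerfect Gᶜ := hc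
  have hne : ∀ k, u ≠ c k := fun k h => hu ⟨k, h.symm⟩
  have hne' : ∀ k, u' ≠ c k := fun k h => hu' ⟨k, h.symm⟩
  have hpentagon : ∀ j : Fin 5, (cycleGraph 5).Adj (j + 2) (j + 3) ∧
      (cycleGraph 5)ᶜ.Adj (j + 1) (j + 4) := by decide
  have hc23 : G.Adj (c (j + 2)) (c (j + 3)) := c.map_adj_iff.2 (hpentagon j).1
  have hc14 : Gᶜ.Adj (c (j + 1)) (c (j + 4)) :=
    (Embedding.complEquiv c).map_adj_iff.2 (hpentagon j).2
  by_contra huu'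
  by_cases hadj : G.Adj u u'
  · exact hG.cliqueFree_four hcard _ <| isNClique_four hadj h.1 h.2.1 h'.1 h'.2.1 hc23
  · exact hGc.cliqueFree_four hcard _ <|
      isNClique_four ⟨huu', hadj⟩ ⟨hne _, h.2.2.1⟩ ⟨hne _, h.2.2.2⟩ ⟨hne' _, h'.2.2.1⟩
        ⟨hne' _, h'.2.2.2⟩ hc14

end IsCore

/-- a core graph containing a 5-hole has at most ten vertices. -/
theorem stmt7 {V : Type} [Fintype V] (G : SimpleGraph V)
    (hc : IsCore G) (h5 : ∃ s : Finset V, IsInducedCycle G 5 s) :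
    Fintype.card V ≤ 10 := by
  classical
  obtain ⟨s, -, -, ⟨e⟩⟩ := h5
  let c : cycleGraph 5 ↪g G := (Embedding.induce (s : Set V)).comp e.symm.toEmbedding
  by_contra! hcard
  choose attachment hattachment using fun u : {u // u ∉ Set.range c} =>
    hc.exists_seesOppositeEdge (by omega) c u.2
  have hinj : Function.Injective attachment := fun u u' h => Subtype.ext <|
    hc.eq_of_seesOppositeEdge (by omega) c u.2 u'.2 (hattachment u) (h ▸ hattachment u')
  have hout := Fintype.card_le_of_injective attachment hinj
  rw [Fintype.card_subtype_compl, Set.card_range_of_injective c.injective] at hout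
  simp only [Fintype.card_fin] at hout
  omega

end TP
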